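/- For every balanced map α, Σ_{S ⊆ N, S ≠ ∅} α(S)·Φ(x_S) ≥ Φ(x_N), where x_S = Σ_{i∈S} x_i; that is, the cooperative game (N, v) with v(S) = Φ(x_S) for joint storage investment is balanced, and hence by the Bondareva–Shapley theorem its core is nonempty. -/
import Mathlib


open MeasureTheory Finset

/-- Expected daily storage cost for demand `Z` and capacity `C`:
`G(Z, C) = πs·C + πh·E[(Z − C)⁺] + πl·E[min(C, Z)]`. -/
noncomputable def expCost {Ω : Type*} [MeasurableSpace Ω] (μ : Measure Ω)
    (πh πl πs : ℝ) (Z : Ω → ℝ) (C : ℝ) : ℝ :=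
  πs * C + πh * ∫ ω, max (Z ω - C) 0 ∂μ + πl * ∫ ω, min C (Z ω) ∂μ

/-- Minimal expected storage cost: `Φ(Z) = inf_{C ≥ 0} G(Z, C)`. -/
noncomputable def minExpCost {Ω : Type*} [MeasurableSpace Ω] (μ : Measure Ω)
    (πh πl πs : ℝ) (Z : Ω → ℝ) : ℝ :=
  sInf ((fun C => expCost μ πh πl πs Z C) '' Set.Ici (0 : ℝ))

section Aux
variable {Ω : Type*} [MeasurableSpace Ω] (μ : Measure Ω) [IsProbabilityMeasure μ]

lemma int_pos_part (Z : Ω → ℝ) (hZ : Integrable Z μ) (C : ℝ) :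
    Integrable (fun ω => max (Z ω - C) 0) μ :=
  (hZ.sub (integrable_const C)).pos_part

lemma expCost_eq (πh πl πs : ℝ) (Z : Ω → ℝ) (hZ : Integrable Z μ) (C : ℝ) :
    expCost μ πh πl πs Z C =
      πs * C + (πh - πl) * ∫ ω, max (Z ω - C) 0 ∂μ + πl * ∫ ω, Z ω ∂μ := by
  have h : ∀ ω, min C (Z ω) = Z ω - max (Z ω - C) 0 := by
    intro ω
    rcases le_total (Z ω) C with h | h
    · rw [min_eq_right h, max_eq_right (sub_nonpos.mpr h)]; ring
    · rw [min_eq_left h, max_eq_left (sub_nonneg.mpr h)]; ring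
  simp only [expCost, h]
  rw [integral_sub hZ (int_pos_part μ Z hZ C)]
  ring

omit [IsProbabilityMeasure μ] in
lemma expCost_smul (πh πl πs : ℝ) (Z : Ω → ℝ) (C : ℝ) {c : ℝ} (hc : 0 ≤ c) :
    expCost μ πh πl πs (fun ω => c * Z ω) (c * C) = c * expCost μ πh πl πs Z C := by
  have h1 : ∀ ω, max (c * Z ω - c * C) 0 = c * max (Z ω - C) 0 := by
    intro ω; rw [← mul_sub, mul_max_of_nonneg _ _ hc, mul_zero]
  have h2 : ∀ ω, min (c * C) (c * Z ω) = c * min C (Z ω) := by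
    intro ω; rw [mul_min_of_nonneg _ _ hc]
  simp only [expCost, h1, h2]
  rw [integral_const_mul, integral_const_mul]
  ring

lemma expCost_sum_le (πh πl πs : ℝ) (hpr : πl ≤ πh) {κ : Type*} (T : Finset κ)
    (Z : κ → Ω → ℝ) (hZ : ∀ s ∈ T, Integrable (Z s) μ) (C : κ → ℝ) :
    expCost μ πh πl πs (fun ω => ∑ s ∈ T, Z s ω) (∑ s ∈ T, C s) ≤
      ∑ s ∈ T, expCost μ πh πl πs (Z s) (C s) := by
  have hZsum : Integrable (fun ω => ∑ s ∈ T, Z s ω) μ := integrable_finset_sum _ hZ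
  rw [expCost_eq μ _ _ _ _ hZsum]
  have hint : ∫ ω, (∑ s ∈ T, Z s ω) ∂μ = ∑ s ∈ T, ∫ ω, Z s ω ∂μ :=
    integral_finset_sum _ hZ
  have hmax : ∫ ω, max ((∑ s ∈ T, Z s ω) - ∑ s ∈ T, C s) 0 ∂μ ≤
      ∑ s ∈ T, ∫ ω, max (Z s ω - C s) 0 ∂μ := by
    rw [← integral_finset_sum _ (fun s hs => int_pos_part μ _ (hZ s hs) (C s))]
    refine integral_mono (int_pos_part μ _ hZsum _)
      (integrable_finset_sum _ (fun s hs => int_pos_part μ _ (hZ s hs) (C s))) ?_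
    intro ω
    dsimp only
    rw [← Finset.sum_sub_distrib]
    exact max_le (Finset.sum_le_sum fun s _ => le_max_left _ _)
      (Finset.sum_nonneg fun s _ => le_max_right _ _)
  have hterm : ∀ s ∈ T, expCost μ πh πl πs (Z s) (C s) =
      πs * C s + (πh - πl) * ∫ ω, max (Z s ω - C s) 0 ∂μ + πl * ∫ ω, Z s ω ∂μ :=
    fun s hs => expCost_eq μ _ _ _ _ (hZ s hs) _
  rw [Finset.sum_congr rfl hterm]
  simp only [Finset.sum_add_distrib, ← Finset.mul_sum]
  have := mul_le_mul_of_nonneg_left hmax (sub_nonneg.mpr hpr)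
  rw [hint]
  linarith

omit [IsProbabilityMeasure μ] in
lemma expCost_nonneg (πh πl πs : ℝ) (hπh : 0 ≤ πh) (hπl : 0 ≤ πl) (hπs : 0 ≤ πs)
    (Z : Ω → ℝ) (hZ0 : ∀ ω, 0 ≤ Z ω) {C : ℝ} (hC : 0 ≤ C) :
    0 ≤ expCost μ πh πl πs Z C := by
  have h1 : 0 ≤ ∫ ω, max (Z ω - C) 0 ∂μ := integral_nonneg fun ω => le_max_right _ _
  have h2 : 0 ≤ ∫ ω, min C (Z ω) ∂μ := integral_nonneg fun ω => le_min hC (hZ0 ω)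
  unfold expCost
  positivity

end Aux

/-- the joint-investment game `(N, v)` with `v(S) = Φ(x_S)` is
balanced: for every balanced map `α` (a map from nonempty coalitions to `[0,1]`
with `Σ_{S ∋ i} α(S) = 1` for all `i`), `Σ_{∅ ≠ S ⊆ N} α(S)·Φ(x_S) ≥ Φ(x_N)`. -/
theorem minExpCost_game_balanced
    {Ω ι : Type*} [MeasurableSpace Ω] [Fintype ι] [DecidableEq ι]
    (μ : Measure Ω) [IsProbabilityMeasure μ]
    (πh πl πs : ℝ) (hprices : πl < πh) (hπl : 0 ≤ πl) (hπs : 0 ≤ πs)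
    (x : ι → Ω → ℝ) (hxint : ∀ i, Integrable (x i) μ) (hx0 : ∀ i ω, 0 ≤ x i ω)
    (α : Finset ι → ℝ)
    (hα : ∀ S : Finset ι, S.Nonempty → α S ∈ Set.Icc (0 : ℝ) 1)
    (hbalanced : ∀ i : ι,
      ∑ S ∈ Finset.univ.filter (fun S : Finset ι => i ∈ S), α S = 1) :
    ∑ S ∈ Finset.univ.filter (fun S : Finset ι => S.Nonempty),
        α S * minExpCost μ πh πl πs (fun ω => ∑ i ∈ S, x i ω) ≥
      minExpCost μ πh πl πs (fun ω => ∑ i, x i ω) := by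
  classical
  set A := Finset.univ.filter (fun S : Finset ι => S.Nonempty) with hA
  set f : Finset ι → Ω → ℝ := fun S ω => ∑ i ∈ S, x i ω with hf
  have hfint : ∀ S : Finset ι, Integrable (f S) μ :=
    fun S => integrable_finset_sum _ (fun i _ => hxint i)
  have hf0 : ∀ S (ω : Ω), 0 ≤ f S ω :=
    fun S ω => Finset.sum_nonneg fun i _ => hx0 i ω
  have hα0 : ∀ S ∈ A, 0 ≤ α S := fun S hS => (hα S (Finset.mem_filter.mp hS).2).1
  have hα1 : ∀ S ∈ A, α S ≤ 1 := fun S hS => (hα S (Finset.mem_filter.mp hS).2).2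
  -- the minimal cost set is nonempty and bounded below, for each coalition
  have hne : ∀ Z : Ω → ℝ,
      ((fun C => expCost μ πh πl πs Z C) '' Set.Ici (0 : ℝ)).Nonempty :=
    fun Z => ⟨expCost μ πh πl πs Z 0, 0, Set.self_mem_Ici, rfl⟩
  have hbdd : ∀ Z : Ω → ℝ, (∀ ω, 0 ≤ Z ω) →
      BddBelow ((fun C => expCost μ πh πl πs Z C) '' Set.Ici (0 : ℝ)) := by
    intro Z hZ0
    refine ⟨0, ?_⟩
    rintro y ⟨C, hC, rfl⟩
    exact expCost_nonneg μ πh πl πs (hπl.trans hprices.le) hπl hπs Z hZ0 hC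
  -- the key pointwise identity from balancedness
  have hswap : ∀ ω : Ω, ∑ S ∈ A, α S * f S ω = ∑ i, x i ω := by
    intro ω
    have h1 : ∀ S ∈ A, α S * f S ω = ∑ i, (if i ∈ S then α S * x i ω else 0) := by
      intro S _
      rw [Finset.sum_ite_mem, Finset.univ_inter, Finset.mul_sum]
    rw [Finset.sum_congr rfl h1, Finset.sum_comm]
    refine Finset.sum_congr rfl fun i _ => ?_
    have h2 : ∑ S ∈ A, (if i ∈ S then α S * x i ω else 0) =
        (∑ S ∈ A.filter (fun S => i ∈ S), α S) * x i ω := by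
      symm
      rw [Finset.sum_mul, Finset.sum_filter]
    rw [h2]
    have h3 : A.filter (fun S => i ∈ S) =
        Finset.univ.filter (fun S : Finset ι => i ∈ S) := by
      rw [hA, Finset.filter_filter]
      refine Finset.filter_congr fun S _ => ?_
      constructor
      · exact fun h => h.2
      · exact fun h => ⟨⟨i, h⟩, h⟩
    rw [h3, hbalanced i, one_mul]
  rw [ge_iff_le]
  refine le_of_forall_pos_le_add fun ε hε => ?_
  have hKpos : (0 : ℝ) < (A.card : ℝ) + 1 := by positivity
  set ε' : ℝ := ε / ((A.card : ℝ) + 1) with hε'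
  have hε'pos : 0 < ε' := div_pos hε hKpos
  -- choose near-optimal capacities
  have hchoice : ∀ S : Finset ι, ∃ C : ℝ, 0 ≤ C ∧
      expCost μ πh πl πs (f S) C < minExpCost μ πh πl πs (f S) + ε' := by
    intro S
    obtain ⟨a, ha, hlt⟩ := Real.lt_sInf_add_pos (hne (f S)) hε'pos
    obtain ⟨C, hC, rfl⟩ := ha
    exact ⟨C, hC, hlt⟩
  choose C hC0 hClt using hchoice
  have hCsum : 0 ≤ ∑ S ∈ A, α S * C S :=
    Finset.sum_nonneg fun S hS => mul_nonneg (hα0 S hS) (hC0 S)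
  have step1 : minExpCost μ πh πl πs (fun ω => ∑ i, x i ω) ≤
      expCost μ πh πl πs (fun ω => ∑ i, x i ω) (∑ S ∈ A, α S * C S) :=
    csInf_le (hbdd _ fun ω => Finset.sum_nonneg fun i _ => hx0 i ω)
      ⟨_, hCsum, rfl⟩
  have step2 : expCost μ πh πl πs (fun ω => ∑ i, x i ω) (∑ S ∈ A, α S * C S) ≤
      ∑ S ∈ A, expCost μ πh πl πs (fun ω => α S * f S ω) (α S * C S) := by
    have heq : (fun ω => ∑ i, x i ω) = fun ω => ∑ S ∈ A, α S * f S ω := by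
      funext ω; rw [hswap]
    rw [heq]
    exact expCost_sum_le μ πh πl πs hprices.le A _
      (fun S _ => (hfint S).const_mul (α S)) _
  have step3 : ∀ S ∈ A, expCost μ πh πl πs (fun ω => α S * f S ω) (α S * C S) =
      α S * expCost μ πh πl πs (f S) (C S) :=
    fun S hS => expCost_smul μ πh πl πs (f S) (C S) (hα0 S hS)
  have step4 : ∑ S ∈ A, α S * expCost μ πh πl πs (f S) (C S) ≤
      ∑ S ∈ A, α S * (minExpCost μ πh πl πs (f S) + ε') :=
    Finset.sum_le_sum fun S hS =>
      mul_le_mul_of_nonneg_left (hClt S).le (hα0 S hS)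
  have step5 : ∑ S ∈ A, α S * (minExpCost μ πh πl πs (f S) + ε') =
      (∑ S ∈ A, α S * minExpCost μ πh πl πs (f S)) + (∑ S ∈ A, α S) * ε' := by
    rw [Finset.sum_mul, ← Finset.sum_add_distrib]
    exact Finset.sum_congr rfl fun S _ => by ring
  have step6 : (∑ S ∈ A, α S) * ε' ≤ ε := by
    have hcard : ∑ S ∈ A, α S ≤ (A.card : ℝ) := by
      calc ∑ S ∈ A, α S ≤ ∑ S ∈ A, (1 : ℝ) := Finset.sum_le_sum hα1
        _ = (A.card : ℝ) := by simp
    have h7 : (∑ S ∈ A, α S) * ε' ≤ ((A.card : ℝ) + 1) * ε' := by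
      have : ∑ S ∈ A, α S ≤ (A.card : ℝ) + 1 := by linarith
      exact mul_le_mul_of_nonneg_right this hε'pos.le
    have h8 : ((A.card : ℝ) + 1) * ε' = ε := by
      rw [hε', mul_div_cancel₀ _ (ne_of_gt hKpos)]
    linarith
  calc minExpCost μ πh πl πs (fun ω => ∑ i, x i ω)
      ≤ ∑ S ∈ A, expCost μ πh πl πs (fun ω => α S * f S ω) (α S * C S) :=
        step1.trans step2
    _ = ∑ S ∈ A, α S * expCost μ πh πl πs (f S) (C S) :=
        Finset.sum_congr rfl step3
    _ ≤ (∑ S ∈ A, α S * minExpCost μ πh πl πs (f S)) + (∑ S ∈ A, α S) * ε' := by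
        rw [← step5]; exact step4
    _ ≤ (∑ S ∈ A, α S * minExpCost μ πh πl πs (f S)) + ε := by linarith
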